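/- arXiv:1809.07570 — 2 statements merged into one kernel-verified Lean document; each statement's English description precedes it below -/
import Mathlib

section
/- Let C : [0,∞) → (0,∞) be decreasing and suppose there is a decreasing function f : (0,∞) → (0,1) with C(x+y) ≤ C(x)·f(y) for all x ≥ 0, y > 0. Then for any L > 0 and dimension d ≥ 1, the lattice sum ∑_{k ∈ ℕ₀^d \ {0}} C(‖k‖₂ L) is bounded above by C(L) · 2^{d-1} d! / (1 - f(L))^d. -/
/-!
Since `‖k‖₂ ≥ ‖k‖_∞`, monotonicity and `C((n + 1)L) ≤ C(L) f(L)ⁿ` bound each term with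
`‖k‖_∞ = n + 1` by `C(L) f(L)ⁿ`. There are at most `d (n + 2)^(d-1) ≤ d 2^(d-1) (d-1)! C(n+d-1, d-1)`
such lattice points, and `∑ₙ C(n+d-1, d-1) rⁿ = (1 - r)^(-d)`.
-/

open Finset
open scoped ENNReal Nat

section ShellSum

variable {α : Type*} {F : α → ℝ} {ν : α → ℕ} {g : ℕ → ℝ} {N : ℕ → ℕ}

theorem tsum_le_tsum_mul_of_encard_fiber_le (hF₀ : ∀ a, 0 ≤ F a) (hFg : ∀ a, F a ≤ g (ν a))
    (hN : ∀ n, (ν ⁻¹' {n}).encard ≤ N n) (hg : ∀ n, 0 ≤ g n)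
    (hs : Summable fun n => N n * g n) :
    ∑' a, F a ≤ ∑' n, N n * g n := by
  have hB : 0 ≤ ∑' n, N n * g n := tsum_nonneg fun n => mul_nonneg (N n).cast_nonneg (hg n)
  -- `∑' a, F a` may be a junk value; its `ℝ≥0∞` counterpart never is.
  have key : ∑' a, ENNReal.ofReal (F a) ≤ ENNReal.ofReal (∑' n, N n * g n) := calc
    ∑' a, ENNReal.ofReal (F a) ≤ ∑' a, ENNReal.ofReal (g (ν a)) :=
      ENNReal.tsum_le_tsum fun a => ENNReal.ofReal_le_ofReal (hFg a)
    _ = ∑' n, (ν ⁻¹' {n}).encard * ENNReal.ofReal (g n) := by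
      rw [← ENNReal.tsum_fiberwise _ ν]
      refine tsum_congr fun n => ?_
      rw [← ENNReal.tsum_set_const]
      exact tsum_congr fun a => by rw [a.2]
    _ ≤ ∑' n, (N n : ℝ≥0∞) * ENNReal.ofReal (g n) := by
      gcongr with n
      exact_mod_cast hN n
    _ = ENNReal.ofReal (∑' n, N n * g n) := by
      rw [ENNReal.ofReal_tsum_of_nonneg (fun n => mul_nonneg (N n).cast_nonneg (hg n)) hs]
      exact tsum_congr fun n => by
        rw [ENNReal.ofReal_mul (Nat.cast_nonneg _), ENNReal.ofReal_natCast]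
  calc ∑' a, F a = (∑' a, ENNReal.ofReal (F a)).toReal := by
        rw [ENNReal.tsum_toReal_eq fun _ => ENNReal.ofReal_ne_top]
        exact tsum_congr fun a => (ENNReal.toReal_ofReal (hF₀ a)).symm
    _ ≤ ∑' n, N n * g n := ENNReal.toReal_le_of_le_ofReal hB key

end ShellSum

theorem add_one_pow_sub_pow_le (m d : ℕ) : (m + 1) ^ d - m ^ d ≤ d * (m + 1) ^ (d - 1) := by
  have h := abs_pow_sub_pow_le (α := ℤ) (m + 1) m d
  have hle : m ^ d ≤ (m + 1) ^ d := by gcongr; omega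
  zify [hle]
  refine (le_abs_self _).trans (h.trans_eq ?_)
  rw [add_sub_cancel_left, abs_one, one_mul,
    max_eq_left (abs_le_abs_of_nonneg (by positivity) (by omega)), abs_of_nonneg (by positivity)]

theorem add_two_pow_le_mul_choose (e n : ℕ) : (n + 2) ^ e ≤ 2 ^ e * e ! * (n + e).choose e := calc
  (n + 2) ^ e ≤ (2 * (n + 1)) ^ e := by gcongr; omega
  _ = 2 ^ e * (n + e + 1 - e) ^ e := by rw [mul_pow]; congr 2; omega
  _ ≤ 2 ^ e * (n + e).descFactorial e := by gcongr; exact Nat.pow_sub_le_descFactorial _ _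
  _ = 2 ^ e * e ! * (n + e).choose e := by
    rw [Nat.descFactorial_eq_factorial_mul_choose, mul_assoc]

section Lattice

variable {ι : Type*} [Fintype ι]

theorem univ_sup_le_sqrt_sum_sq (k : ι → ℕ) : ((univ.sup k : ℕ) : ℝ) ≤ √(∑ i, (k i : ℝ) ^ 2) := by
  refine sup_induction (p := fun m : ℕ => (m : ℝ) ≤ √(∑ i, (k i : ℝ) ^ 2)) (by simp)
    (fun a ha b hb => by simpa using ⟨ha, hb⟩) fun i _ => ?_
  exact Real.le_sqrt_of_sq_le (single_le_sum (fun j _ => sq_nonneg (k j : ℝ)) (mem_univ i))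

theorem univ_sup_ne_zero {k : ι → ℕ} (hk : k ≠ 0) : univ.sup k ≠ 0 := by
  contrapose! hk
  exact funext fun i => Nat.eq_zero_of_le_zero (hk ▸ le_sup (mem_univ i))

theorem card_Iic_succ_sdiff_Iic_le [DecidableEq ι] (m : ℕ) :
    #(Iic (fun _ : ι => m + 1) \ Iic fun _ => m) ≤
      Fintype.card ι * (m + 2) ^ (Fintype.card ι - 1) := by
  rw [card_sdiff_of_subset (Iic_subset_Iic.2 fun _ => m.le_succ), Pi.card_Iic, Pi.card_Iic]
  simp only [Nat.card_Iic, prod_const, card_univ]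
  exact add_one_pow_sub_pow_le (m + 1) _

theorem encard_preimage_univ_sup_sub_one_le [DecidableEq ι] (n : ℕ) :
    ((fun k : {k : ι → ℕ // k ≠ 0} => univ.sup k.1 - 1) ⁻¹' {n}).encard ≤
      Fintype.card ι * (n + 2) ^ (Fintype.card ι - 1) := by
  have hshell : Subtype.val '' ((fun k : {k : ι → ℕ // k ≠ 0} => univ.sup k.1 - 1) ⁻¹' {n}) ⊆
      ↑(Iic (fun _ : ι => n + 1) \ Iic fun _ => n) := by
    rintro _ ⟨k, hk, rfl⟩
    have := univ_sup_ne_zero k.2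
    have hsup_le (m : ℕ) : (∀ i, k.1 i ≤ m) ↔ univ.sup k.1 ≤ m := by simp [Finset.sup_le_iff]
    simp only [Set.mem_preimage, Set.mem_singleton_iff] at hk
    simp only [coe_sdiff, Set.mem_sdiff, mem_coe, mem_Iic, Pi.le_def, hsup_le]
    omega
  calc _ = (Subtype.val '' ((fun k : {k : ι → ℕ // k ≠ 0} => univ.sup k.1 - 1) ⁻¹' {n})).encard :=
        (Subtype.val_injective.encard_image _).symm
    _ ≤ #(Iic (fun _ : ι => n + 1) \ Iic fun _ => n) := by
        rw [← Set.encard_coe_eq_coe_finsetCard]; exact Set.encard_le_encard hshell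
    _ ≤ _ := by exact_mod_cast card_Iic_succ_sdiff_Iic_le n

variable {C f : ℝ → ℝ} {L : ℝ}

theorem apply_succ_mul_le_mul_pow (hsub : ∀ x y, 0 ≤ x → 0 < y → C (x + y) ≤ C x * f y)
    (hf : 0 ≤ f L) (hL : 0 < L) (n : ℕ) : C ((n + 1) * L) ≤ C L * f L ^ n := by
  induction n with
  | zero => simp
  | succ n ih => calc
    C ((↑(n + 1) + 1) * L) = C ((n + 1) * L + L) := by push_cast; ring_nf
    _ ≤ C ((n + 1) * L) * f L := hsub _ _ (by positivity) hL
    _ ≤ C L * f L ^ n * f L := by gcongr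
    _ = C L * f L ^ (n + 1) := by ring

theorem apply_sqrt_sum_sq_mul_le (hC_anti : ∀ x y, 0 ≤ x → x ≤ y → C y ≤ C x)
    (hsub : ∀ x y, 0 ≤ x → 0 < y → C (x + y) ≤ C x * f y) (hf : 0 ≤ f L) (hL : 0 < L)
    {k : ι → ℕ} (hk : k ≠ 0) :
    C (√(∑ i, (k i : ℝ) ^ 2) * L) ≤ C L * f L ^ (univ.sup k - 1) := by
  have hsup : ((univ.sup k - 1 : ℕ) : ℝ) + 1 = univ.sup k := by
    have := univ_sup_ne_zero hk
    norm_cast; omega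
  calc C (√(∑ i, (k i : ℝ) ^ 2) * L) ≤ C ((↑(univ.sup k - 1) + 1) * L) := by
        refine hC_anti _ _ (by positivity) ?_
        rw [hsup]; gcongr; exact univ_sup_le_sqrt_sum_sq k
    _ ≤ C L * f L ^ (univ.sup k - 1) := apply_succ_mul_le_mul_pow hsub hf hL _

end Lattice

theorem stmt_6_general (d : ℕ) (C f : ℝ → ℝ)
    (hC_pos : ∀ x, 0 ≤ x → 0 < C x)
    (hC_anti : ∀ x y, 0 ≤ x → x ≤ y → C y ≤ C x)
    (hf_pos : ∀ y, 0 < y → 0 < f y)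
    (hf_lt : ∀ y, 0 < y → f y < 1)
    (hsub : ∀ x y, 0 ≤ x → 0 < y → C (x + y) ≤ C x * f y)
    (L : ℝ) (hL : 0 < L) :
    ∑' k : {k : Fin d → ℕ // k ≠ 0}, C (Real.sqrt (∑ i, ((k.1 i : ℝ)) ^ 2) * L)
      ≤ C L * 2 ^ (d - 1) * Nat.factorial d / (1 - f L) ^ d := by
  obtain _ | e := d
  · have : IsEmpty {k : Fin 0 → ℕ // k ≠ 0} := ⟨fun k => k.2 (Subsingleton.elim _ _)⟩
    simpa using (hC_pos L hL.le).le
  have hf : 0 ≤ f L := (hf_pos L hL).le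
  have hr : ‖f L‖ < 1 := by rw [Real.norm_of_nonneg hf]; exact hf_lt L hL
  have hfiber (n : ℕ) :
      ((fun k : {k : Fin (e + 1) → ℕ // k ≠ 0} => univ.sup k.1 - 1) ⁻¹' {n}).encard
        ≤ ((e + 1) * 2 ^ e * e ! * (n + e).choose e : ℕ) := by
    have h := encard_preimage_univ_sup_sub_one_le (ι := Fin (e + 1)) n
    rw [Fintype.card_fin, add_tsub_cancel_right] at h
    refine h.trans ?_
    exact_mod_cast (Nat.mul_le_mul_left (e + 1) (add_two_pow_le_mul_choose e n)).trans_eq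
      (by ring)
  have hseries : HasSum
      (fun n : ℕ => (((e + 1) * 2 ^ e * e ! * (n + e).choose e : ℕ) : ℝ) * (C L * f L ^ n))
      (C L * 2 ^ (e + 1 - 1) * (e + 1)! / (1 - f L) ^ (e + 1)) := by
    have hval : C L * 2 ^ (e + 1 - 1) * (e + 1)! / (1 - f L) ^ (e + 1)
        = C L * ((e + 1) * 2 ^ e * e !) * (1 / (1 - f L) ^ (e + 1)) := by
      rw [Nat.factorial_succ]; push_cast; ring
    rw [hval]
    exact ((hasSum_choose_mul_geometric_of_norm_lt_one e hr).mul_left _).congr_fun fun n => by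
      push_cast; ring
  refine (tsum_le_tsum_mul_of_encard_fiber_le (fun k => (hC_pos _ (by positivity)).le)
    (fun k => apply_sqrt_sum_sq_mul_le hC_anti hsub hf hL k.2) hfiber
    (fun n => by have := hC_pos L hL.le; positivity) hseries.summable).trans_eq hseries.tsum_eq

/-- Lattice sum bound: under monotonicity, positivity and submultiplicativity of `C`,
`∑_{k ∈ ℕ₀^d \ {0}} C(‖k‖₂ L) ≤ C(L) 2^(d-1) d! / (1 - f(L))^d`. -/
theorem stmt_6 (d : ℕ) (hd : 1 ≤ d) (C f : ℝ → ℝ)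
    (hC_pos : ∀ x, 0 ≤ x → 0 < C x)
    (hC_anti : ∀ x y, 0 ≤ x → x ≤ y → C y ≤ C x)
    (hf_pos : ∀ y, 0 < y → 0 < f y)
    (hf_lt : ∀ y, 0 < y → f y < 1)
    (hf_anti : ∀ x y, 0 < x → x ≤ y → f y ≤ f x)
    (hsub : ∀ x y, 0 ≤ x → 0 < y → C (x + y) ≤ C x * f y)
    (L : ℝ) (hL : 0 < L) :
    ∑' k : {k : Fin d → ℕ // k ≠ 0}, C (Real.sqrt (∑ i, ((k.1 i : ℝ)) ^ 2) * L)
      ≤ C L * 2 ^ (d - 1) * Nat.factorial d / (1 - f L) ^ d :=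
  stmt_6_general d C f hC_pos hC_anti hf_pos hf_lt hsub L hL
end

section
/- Let d ≥ 1, z ∈ [0,2L]^d with L > 0, and let C : [0,∞) → (0,∞) be decreasing. Then ∑_{k∈ℕ₀^d} ∑_{ε∈{-1,1}^d} C(‖2Lk + (1−ε)L + ε.z‖₂) ≤ ∑_{k∈ℕ₀^d, k≠0} C(‖k‖₂ L) + C(‖min(z, 2L·1 − z)‖₂), assuming the left-hand series converges, where the minimum is taken componentwise and 1 is the all-ones vector. -/
/-!
Put `σ_i := [z_i ≤ L]` and index the image point of `(k, ε)` by `n_i := 2 k_i + [ε_i ≠ σ_i]`.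
This identifies the pairs `(k, ε)` with `ℕ^d`, and each coordinate of the image point with index
`n` lies in `[L n_i, L (n_i + 1)]`, the point with index `0` being `min(z, 2L - z)`. As `C` is
decreasing, the term with index `n ≠ 0` is at most `C(L‖n‖)`, and the convergent left-hand side
dominates `∑ C(L‖n + 1‖)`, which in turn controls the lattice sum `∑ C(L‖n‖)` after halving
all coordinates of `n`.
-/

open Finset

variable {ι : Type*} [Fintype ι]

lemma tsum_le_add_tsum_ne {α : Type*} {F G : α → ℝ} (a : α) (hF : Summable F) (hG : Summable G)
    (h : ∀ x, x ≠ a → F x ≤ G x) : ∑' x, F x ≤ F a + ∑' x : {x // x ≠ a}, G x := by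
  rw [← hF.tsum_subtype_add_tsum_subtype_compl {a}, tsum_singleton]
  gcongr
  exact (hF.subtype _).tsum_le_tsum (fun x => h x x.2) (hG.subtype _)

lemma summable_prod_of_summable_sum {α β : Type*} [Fintype β] {f : α × β → ℝ} (hf : 0 ≤ f)
    (h : Summable fun a => ∑ b, f (a, b)) : Summable f :=
  (summable_prod_of_nonneg hf).2 ⟨fun _ => .of_finite, by simpa only [tsum_fintype] using h⟩

lemma tsum_sum_eq_tsum_prod {α β : Type*} [Fintype β] {f : α × β → ℝ} (hf : Summable f) :
    ∑' a, ∑ b, f (a, b) = ∑' p, f p := by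
  simp only [hf.tsum_prod' fun _ => .of_finite, tsum_fintype]

lemma sqrt_sum_sq_le_sqrt_sum_sq {v w : ι → ℝ} (h₀ : ∀ i, 0 ≤ v i) (h : ∀ i, v i ≤ w i) :
    √(∑ i, v i ^ 2) ≤ √(∑ i, w i ^ 2) :=
  Real.sqrt_le_sqrt <| sum_le_sum fun i _ => pow_le_pow_left₀ (h₀ i) (h i) 2

lemma sqrt_sum_mul_sq {c : ℝ} (hc : 0 ≤ c) (v : ι → ℝ) :
    √(∑ i, (c * v i) ^ 2) = √(∑ i, v i ^ 2) * c := by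
  simp_rw [mul_pow, ← mul_sum, Real.sqrt_mul (sq_nonneg c), Real.sqrt_sq hc, mul_comm]

def foldEquiv (σ : ι → Bool) : (ι → ℕ) × (ι → Bool) ≃ (ι → ℕ) :=
  (Equiv.arrowProdEquivProdArrow ι (fun _ => ℕ) (fun _ => Bool)).symm.trans <|
    Equiv.piCongrRight fun i => (Equiv.prodComm ℕ Bool).trans <|
      ((Function.Involutive.toPerm (xor (σ i)) (fun b => by simp)).prodCongr
        (Equiv.refl ℕ)).trans Equiv.boolProdNatEquivNat

omit [Fintype ι] in
lemma foldEquiv_apply (σ : ι → Bool) (p : (ι → ℕ) × (ι → Bool)) (i : ι) :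
    foldEquiv σ p i = Nat.bit (xor (σ i) (p.2 i)) (p.1 i) := rfl

omit [Fintype ι] in
lemma foldEquiv_symm_zero (σ : ι → Bool) : (foldEquiv σ).symm 0 = (0, σ) := by
  rw [Equiv.symm_apply_eq]
  ext i
  simp [foldEquiv_apply]

lemma summable_comp_half {G : (ι → ℕ) → ℝ} (hG₀ : 0 ≤ G) (hG : Summable G) :
    Summable fun n : ι → ℕ => G fun i => n i / 2 := by
  rw [← (foldEquiv fun _ => false).summable_iff]
  simpa [Function.comp_def, foldEquiv_apply, Nat.bit_div_two] using
    hG.mul_of_nonneg (Summable.of_finite (f := fun _ : ι → Bool => (1 : ℝ))) hG₀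
      fun _ => zero_le_one

lemma four_mul_sq_half_add_one_le (n : ℕ) :
    4 * (((n / 2 : ℕ) : ℝ) + 1) ^ 2 ≤ 3 * (n : ℝ) ^ 2 + 8 := by
  have h : 2 * ((n / 2 : ℕ) : ℝ) ≤ n := by exact_mod_cast Nat.mul_div_le n 2
  nlinarith [sq_nonneg ((n : ℝ) - 1), Nat.cast_nonneg (α := ℝ) (n / 2)]

lemma sum_sq_half_add_one_le {n : ι → ℕ} (hn : 8 * Fintype.card ι ≤ ∑ i, (n i : ℝ) ^ 2) :
    ∑ i, (((n i / 2 : ℕ) : ℝ) + 1) ^ 2 ≤ ∑ i, (n i : ℝ) ^ 2 := by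
  have := sum_le_sum fun i (_ : i ∈ univ) => four_mul_sq_half_add_one_le (n i)
  rw [← mul_sum, sum_add_distrib, ← mul_sum] at this
  simp only [sum_const, card_univ, nsmul_eq_mul] at this
  linarith

lemma finite_setOf_sum_sq_lt (B : ℝ) : {n : ι → ℕ | ∑ i, (n i : ℝ) ^ 2 < B}.Finite := by
  classical
  refine (Set.finite_Iic fun _ => ⌈B⌉₊).subset fun n hn i => ?_
  have hi : (n i : ℝ) ^ 2 ≤ ∑ j, (n j : ℝ) ^ 2 :=
    single_le_sum (f := fun j => (n j : ℝ) ^ 2) (fun j _ => sq_nonneg _) (mem_univ i)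
  have hself : (n i : ℝ) ≤ (n i : ℝ) ^ 2 := by exact_mod_cast Nat.le_self_pow two_ne_zero (n i)
  have : (n i : ℝ) ≤ ⌈B⌉₊ := by linarith [Nat.le_ceil B, (show _ < B from hn)]
  exact_mod_cast this

/-- Compare the term at `n` with the one at `n / 2`: halving is `2 ^ |ι|`-to-one, and
`∑ (n_i / 2 + 1)² ≤ ∑ n_i²` for all but finitely many `n`. -/
lemma summable_of_summable_add_one {g : ℝ → ℝ} (hg₀ : ∀ x, 0 ≤ x → 0 ≤ g x)
    (hg : AntitoneOn g (Set.Ici 0)) (h : Summable fun m : ι → ℕ => g (∑ i, ((m i : ℝ) + 1) ^ 2)) :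
    Summable fun n : ι → ℕ => g (∑ i, (n i : ℝ) ^ 2) := by
  refine (summable_comp_half (fun m => hg₀ _ (by positivity)) h).of_norm_bounded_eventually ?_
  filter_upwards [(finite_setOf_sum_sq_lt (8 * Fintype.card ι)).compl_mem_cofinite] with n hn
  rw [Real.norm_of_nonneg (hg₀ _ (by positivity))]
  exact hg (Set.mem_Ici.2 (by positivity)) (Set.mem_Ici.2 (by positivity))
    (sum_sq_half_add_one_le (not_lt.1 hn))

def reflectionSign (b : Bool) : ℝ := if b then 1 else -1

def reflectedCoord (L z : ℝ) (k : ℕ) (b : Bool) : ℝ :=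
  2 * L * k + (1 - reflectionSign b) * L + reflectionSign b * z

def imagePoint (L : ℝ) (z : ι → ℝ) (p : (ι → ℕ) × (ι → Bool)) : ι → ℝ :=
  fun i => reflectedCoord L (z i) (p.1 i) (p.2 i)

noncomputable def nearWall (L : ℝ) (z : ι → ℝ) : ι → Bool :=
  fun i => decide (z i ≤ L)

lemma reflectedCoord_mem_Icc {L z : ℝ} (hz : z ∈ Set.Icc 0 (2 * L)) (k : ℕ) (b : Bool) :
    reflectedCoord L z k b ∈ Set.Icc (L * Nat.bit (xor (decide (z ≤ L)) b) k)
      (L * (Nat.bit (xor (decide (z ≤ L)) b) k + 1)) := by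
  obtain ⟨hz₀, hz₁⟩ := hz
  by_cases h : z ≤ L <;> cases b <;>
    simp only [reflectedCoord, reflectionSign, Nat.bit_val, h, decide_true, decide_false,
      Bool.xor_true, Bool.xor_false, Bool.not_true, Bool.not_false, Bool.toNat_true, Bool.toNat_false,
      Bool.false_eq_true, ↓reduceIte, Set.mem_Icc] <;> push_cast <;> constructor <;> linarith

section imagePoint

variable {L : ℝ} {z : ι → ℝ}

omit [Fintype ι] in
lemma imagePoint_mem_Icc (hz : ∀ i, z i ∈ Set.Icc 0 (2 * L)) (p : (ι → ℕ) × (ι → Bool)) (i : ι) :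
    imagePoint L z p i ∈
      Set.Icc (L * foldEquiv (nearWall L z) p i) (L * (foldEquiv (nearWall L z) p i + 1)) :=
  reflectedCoord_mem_Icc (hz i) (p.1 i) (p.2 i)

omit [Fintype ι] in
lemma imagePoint_zero_nearWall (hz : ∀ i, z i ∈ Set.Icc 0 (2 * L)) :
    imagePoint L z (0, nearWall L z) = fun i => min (z i) (2 * L - z i) := by
  ext i
  obtain ⟨hz₀, hz₁⟩ := hz i
  by_cases h : z i ≤ L
  · rw [min_eq_left (by linarith)]
    simp only [imagePoint, reflectedCoord, reflectionSign, nearWall, h, decide_true, ↓reduceIte,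
      Pi.zero_apply, Nat.cast_zero]
    ring
  · rw [min_eq_right (by linarith)]
    simp only [imagePoint, reflectedCoord, reflectionSign, nearWall, h, decide_false,
      Bool.false_eq_true, ↓reduceIte, Pi.zero_apply, Nat.cast_zero]
    ring

lemma sqrt_sum_sq_foldEquiv_mul_le (hL : 0 ≤ L) (hz : ∀ i, z i ∈ Set.Icc 0 (2 * L))
    (p : (ι → ℕ) × (ι → Bool)) :
    √(∑ i, (foldEquiv (nearWall L z) p i : ℝ) ^ 2) * L ≤ √(∑ i, imagePoint L z p i ^ 2) := by
  rw [← sqrt_sum_mul_sq hL]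
  exact sqrt_sum_sq_le_sqrt_sum_sq (fun i => by positivity) fun i => (imagePoint_mem_Icc hz p i).1

lemma sqrt_sum_sq_imagePoint_le (hL : 0 ≤ L) (hz : ∀ i, z i ∈ Set.Icc 0 (2 * L))
    (p : (ι → ℕ) × (ι → Bool)) :
    √(∑ i, imagePoint L z p i ^ 2) ≤ √(∑ i, ((foldEquiv (nearWall L z) p i : ℝ) + 1) ^ 2) * L := by
  rw [← sqrt_sum_mul_sq hL]
  exact sqrt_sum_sq_le_sqrt_sum_sq
    (fun i => (mul_nonneg hL (Nat.cast_nonneg _)).trans (imagePoint_mem_Icc hz p i).1)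
    fun i => (imagePoint_mem_Icc hz p i).2

end imagePoint

theorem stmt_11_general (d : ℕ) (L : ℝ) (hL : 0 < L)
    (z : Fin d → ℝ) (hz : ∀ i, z i ∈ Set.Icc 0 (2 * L))
    (C : ℝ → ℝ)
    (hC_pos : ∀ x, 0 ≤ x → 0 < C x)
    (hC_anti : ∀ x y, 0 ≤ x → x ≤ y → C y ≤ C x)
    (hsum : Summable fun k : Fin d → ℕ => ∑ ε : Fin d → Bool,
      C (Real.sqrt (∑ i, (2 * L * k i + (1 - (if ε i then (1:ℝ) else -1)) * L
          + (if ε i then (1:ℝ) else -1) * z i) ^ 2))) :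
    (∑' k : Fin d → ℕ, ∑ ε : Fin d → Bool,
        C (Real.sqrt (∑ i, (2 * L * k i + (1 - (if ε i then (1:ℝ) else -1)) * L
            + (if ε i then (1:ℝ) else -1) * z i) ^ 2)))
      ≤ (∑' k : {k : Fin d → ℕ // k ≠ 0}, C (Real.sqrt (∑ i, ((k.1 i : ℝ)) ^ 2) * L))
          + C (Real.sqrt (∑ i, (min (z i) (2 * L - z i)) ^ 2)) := by
  set E := foldEquiv (nearWall L z)
  let f (p : (Fin d → ℕ) × (Fin d → Bool)) : ℝ := C √(∑ i, imagePoint L z p i ^ 2)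
  let g (x : ℝ) : ℝ := C (√x * L)
  have hC : AntitoneOn C (Set.Ici 0) := fun x hx y _ hxy => hC_anti x y hx hxy
  have hg : AntitoneOn g (Set.Ici 0) := fun x _ y _ hxy =>
    hC (Set.mem_Ici.2 (by positivity)) (Set.mem_Ici.2 (by positivity)) (by gcongr)
  have hf : Summable f := summable_prod_of_summable_sum (fun p => (hC_pos _ (by positivity)).le) hsum
  have hfE : Summable (f ∘ E.symm) := E.symm.summable_iff.2 hf
  have hupper (n : Fin d → ℕ) : f (E.symm n) ≤ g (∑ i, (n i : ℝ) ^ 2) := by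
    simpa only [E, Equiv.apply_symm_apply] using hC (Set.mem_Ici.2 (by positivity)) (Set.mem_Ici.2 (by positivity))
      (sqrt_sum_sq_foldEquiv_mul_le hL.le hz (E.symm n))
  have hlower (n : Fin d → ℕ) : g (∑ i, ((n i : ℝ) + 1) ^ 2) ≤ f (E.symm n) := by
    simpa only [E, Equiv.apply_symm_apply] using hC (Set.mem_Ici.2 (by positivity)) (Set.mem_Ici.2 (by positivity))
      (sqrt_sum_sq_imagePoint_le hL.le hz (E.symm n))
  have hg_summable : Summable fun n : Fin d → ℕ => g (∑ i, (n i : ℝ) ^ 2) :=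
    summable_of_summable_add_one (fun x _ => (hC_pos _ (by positivity)).le) hg
      (hfE.of_nonneg_of_le (fun n => (hC_pos _ (by positivity)).le) hlower)
  calc ∑' k, ∑ ε, f (k, ε) = ∑' n, f (E.symm n) := by rw [tsum_sum_eq_tsum_prod hf, E.symm.tsum_eq]
    _ ≤ f (E.symm 0) + ∑' n : {n : Fin d → ℕ // n ≠ 0}, g (∑ i, (n.1 i : ℝ) ^ 2) :=
      tsum_le_add_tsum_ne 0 hfE hg_summable fun n _ => hupper n
    _ = _ := by
      rw [add_comm, foldEquiv_symm_zero]
      simp only [f, g, imagePoint_zero_nearWall hz]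

/-- Bound on the sum over reflected/translated image points in the Neumann folding:
`∑_{k∈ℕ₀^d} ∑_{ε∈{-1,1}^d} C(‖2Lk + (1-ε)L + ε.z‖₂)
  ≤ ∑_{k∈ℕ₀^d, k≠0} C(‖k‖₂ L) + C(‖min(z, 2L·1 - z)‖₂)`. -/
theorem stmt_11 (d : ℕ) (hd : 1 ≤ d) (L : ℝ) (hL : 0 < L)
    (z : Fin d → ℝ) (hz : ∀ i, z i ∈ Set.Icc 0 (2 * L))
    (C : ℝ → ℝ)
    (hC_pos : ∀ x, 0 ≤ x → 0 < C x)
    (hC_anti : ∀ x y, 0 ≤ x → x ≤ y → C y ≤ C x)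
    (hsum : Summable fun k : Fin d → ℕ => ∑ ε : Fin d → Bool,
      C (Real.sqrt (∑ i, (2 * L * k i + (1 - (if ε i then (1:ℝ) else -1)) * L
          + (if ε i then (1:ℝ) else -1) * z i) ^ 2))) :
    (∑' k : Fin d → ℕ, ∑ ε : Fin d → Bool,
        C (Real.sqrt (∑ i, (2 * L * k i + (1 - (if ε i then (1:ℝ) else -1)) * L
            + (if ε i then (1:ℝ) else -1) * z i) ^ 2)))
      ≤ (∑' k : {k : Fin d → ℕ // k ≠ 0}, C (Real.sqrt (∑ i, ((k.1 i : ℝ)) ^ 2) * L))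
          + C (Real.sqrt (∑ i, (min (z i) (2 * L - z i)) ^ 2)) :=
  stmt_11_general d L hL z hz C hC_pos hC_anti hsum
end
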